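/- Let C₁, C₂, B, D > 0 and let (δ_k)_{k≥K} be a positive sequence with δ_k ≤ 1/(B·C₂) for all k ≥ K and δ_k(1 − δ_k) ≤ δ_{k+1}. Suppose B·C₂ > 1 and D ≥ B²C₁/(B·C₂ − 1). Let N > 0 and let (e_k)_{k≥K} be a nonnegative sequence satisfying e_{k+1} ≤ (1 − B·δ_k·C₂)·e_k + (B·δ_k)²·C₁·N for all k ≥ K, with e_K ≤ N·D·δ_K. Then e_k ≤ N·D·δ_k for all k ≥ K. -/
import Mathlib


theorem stmt_3 (C₁ C₂ B D N : ℝ) (K : ℕ) (δ e : ℕ → ℝ)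
    (hC₁ : 0 < C₁) (hC₂ : 0 < C₂) (hB : 0 < B) (hD : 0 < D) (hN : 0 < N)
    (hδpos : ∀ k ≥ K, 0 < δ k)
    (hδsmall : ∀ k ≥ K, δ k ≤ 1 / (B * C₂))
    (hδrec : ∀ k ≥ K, δ k * (1 - δ k) ≤ δ (k + 1))
    (hBC₂ : 1 < B * C₂)
    (hDge : B ^ 2 * C₁ / (B * C₂ - 1) ≤ D)
    (he0 : ∀ k ≥ K, 0 ≤ e k)
    (herec : ∀ k ≥ K, e (k + 1) ≤ (1 - B * δ k * C₂) * e k + (B * δ k) ^ 2 * C₁ * N)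
    (heK : e K ≤ N * D * δ K) :
    ∀ k ≥ K, e k ≤ N * D * δ k := by
  have hBC₂pos : 0 < B * C₂ := mul_pos hB hC₂
  have hD' : B ^ 2 * C₁ ≤ D * (B * C₂ - 1) := by
    have := (div_le_iff₀ (by linarith : (0:ℝ) < B * C₂ - 1)).mp hDge
    linarith
  intro k hk
  induction k, hk using Nat.le_induction with
  | base => exact heK
  | succ n hn ih =>
    have hδ := hδpos n hn
    have hsmall := hδsmall n hn
    have hcoef : 0 ≤ 1 - B * δ n * C₂ := by
      have h := (le_div_iff₀ hBC₂pos).mp hsmall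
      nlinarith
    have h1 : e (n + 1) ≤ (1 - B * δ n * C₂) * (N * D * δ n) + (B * δ n) ^ 2 * C₁ * N := by
      refine (herec n hn).trans ?_
      gcongr
    have h2 : (1 - B * δ n * C₂) * (N * D * δ n) + (B * δ n) ^ 2 * C₁ * N
        ≤ N * D * (δ n * (1 - δ n)) := by
      nlinarith [mul_nonneg (mul_nonneg hN.le (mul_pos hδ hδ).le) (sub_nonneg.mpr hD')]
    have h3 : N * D * (δ n * (1 - δ n)) ≤ N * D * δ (n + 1) :=
      mul_le_mul_of_nonneg_left (hδrec n hn) (mul_pos hN hD).le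
    linarith
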